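/- arXiv:2405.00224 — 6 statements merged into one kernel-verified Lean document; each statement's English description precedes it below -/
import Mathlib

section
/- Let T > 0, a > 0, b ∈ ℝ, φ : [0,T) → ℝ continuous with φ(t) ≥ φ₀ > 0, and V : [0,T) → [0,∞) differentiable with V'(t) ≤ φ(t)·(-a·V(t)) + b·|d(t)| for a bounded measurable d : [0,T) → ℝ with lim_{t→T⁻} d(t) = 0. If ∫₀ᵗ φ(s) ds → ∞ as t → T⁻, then lim_{t→T⁻} V(t) = 0. -/
/-!
Write `Φ t = ∫₀ᵗ φ`. Fix `K > 0`. Since `d → 0` and `φ ≥ φ₀ > 0`, near `T` we have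
`b |d| ≤ a φ K`, so `V' ≤ -a φ (V - K)` there, and `(V - K) e^{a Φ}` is antitone. Hence
`V t ≤ K + C e^{-a Φ t}` for `t` close to `T`, and `Φ t → ∞` makes the last term vanish:
`limsup V ≤ K` for every `K > 0`, while `V ≥ 0`.
-/

open Filter Set Topology

theorem hasDerivAt_integral_of_continuousOn_Ico {φ : ℝ → ℝ} {c T s : ℝ}
    (hφ : ContinuousOn φ (Ico c T)) (hs : s ∈ Ioo c T) :
    HasDerivAt (fun t => ∫ x in c..t, φ x) (φ s) s := by
  have hsub : uIcc c s ⊆ Ico c T := by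
    rw [uIcc_of_le hs.1.le]
    exact fun x hx => ⟨hx.1, hx.2.trans_lt hs.2⟩
  have hmeas : StronglyMeasurableAtFilter φ (𝓝 s) :=
    ⟨Ioo c T, Ioo_mem_nhds hs.1 hs.2,
      (hφ.mono Ioo_subset_Ico_self).aestronglyMeasurable measurableSet_Ioo⟩
  exact intervalIntegral.integral_hasDerivAt_right ((hφ.mono hsub).intervalIntegrable) hmeas
    (hφ.continuousAt (Ico_mem_nhds hs.1 hs.2))

theorem antitoneOn_sub_mul_exp_of_deriv_le {V V' Φ φ : ℝ → ℝ} {a K t₀ t₁ : ℝ}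
    (hV : ∀ s ∈ Icc t₀ t₁, HasDerivAt V (V' s) s)
    (hΦ : ∀ s ∈ Icc t₀ t₁, HasDerivAt Φ (φ s) s)
    (hle : ∀ s ∈ Ioo t₀ t₁, V' s ≤ -(a * φ s) * (V s - K)) :
    AntitoneOn (fun s => (V s - K) * Real.exp (a * Φ s)) (Icc t₀ t₁) := by
  have hderiv : ∀ s ∈ Icc t₀ t₁, HasDerivAt (fun s => (V s - K) * Real.exp (a * Φ s))
      (Real.exp (a * Φ s) * (V' s + a * φ s * (V s - K))) s := fun s hs =>
    (((hV s hs).sub_const K).mul ((hΦ s hs).const_mul a).exp).congr_deriv (by ring)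
  refine antitoneOn_of_hasDerivWithinAt_nonpos (convex_Icc t₀ t₁)
    (fun s hs => (hderiv s hs).continuousAt.continuousWithinAt)
    (fun s hs => (hderiv s (interior_subset hs)).hasDerivWithinAt) fun s hs => ?_
  rw [interior_Icc] at hs
  exact mul_nonpos_of_nonneg_of_nonpos (Real.exp_pos _).le (by linarith [hle s hs])

theorem eventually_lt_of_deriv_le_neg_mul_sub {V V' Φ φ : ℝ → ℝ} {T a K c : ℝ}
    (ha : 0 < a) (hKc : K < c)
    (hderiv : ∀ᶠ s in 𝓝[<] T, HasDerivAt V (V' s) s ∧ HasDerivAt Φ (φ s) s ∧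
      V' s ≤ -(a * φ s) * (V s - K))
    (hΦ : Tendsto Φ (𝓝[<] T) atTop) :
    ∀ᶠ t in 𝓝[<] T, V t < c := by
  obtain ⟨l, hlT, hl⟩ := mem_nhdsLT_iff_exists_Ioo_subset.mp hderiv
  obtain ⟨t₀, hlt₀, ht₀T⟩ := exists_between (α := ℝ) hlT
  set C := (V t₀ - K) * Real.exp (a * Φ t₀)
  have hdecay : Tendsto (fun t => C * Real.exp (-(a * Φ t))) (𝓝[<] T) (𝓝 0) := by
    simpa using (Real.tendsto_exp_atBot.comp
      (tendsto_neg_atTop_atBot.comp (hΦ.const_mul_atTop ha))).const_mul C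
  filter_upwards [Ioo_mem_nhdsLT ht₀T, hdecay.eventually (gt_mem_nhds (sub_pos.2 hKc))]
    with t ht hCt
  have hsub : Icc t₀ t ⊆ Ioo l T := Icc_subset_Ioo hlt₀ ht.2
  have hanti := antitoneOn_sub_mul_exp_of_deriv_le (fun s hs => (hl (hsub hs)).1)
    (fun s hs => (hl (hsub hs)).2.1)
    (fun s hs => (hl (hsub (Ioo_subset_Icc_self hs))).2.2)
    (left_mem_Icc.2 ht.1.le) (right_mem_Icc.2 ht.1.le) ht.1.le
  have hVt : V t - K ≤ C * Real.exp (-(a * Φ t)) := by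
    rw [Real.exp_neg, ← div_eq_mul_inv, le_div_iff₀ (Real.exp_pos _)]
    exact hanti
  linarith

theorem stmt8_general (T a b φ₀ : ℝ) (hT : 0 < T) (ha : 0 < a) (hφ₀ : 0 < φ₀)
    (φ V V' d : ℝ → ℝ)
    (hφcont : ContinuousOn φ (Set.Ico 0 T))
    (hφlb : ∀ t ∈ Set.Ico 0 T, φ₀ ≤ φ t)
    (hVnn : ∀ t ∈ Set.Ico 0 T, 0 ≤ V t)
    (hd0 : Tendsto d (nhdsWithin T (Set.Iio T)) (nhds 0))
    (hderiv : ∀ t ∈ Set.Ico 0 T, HasDerivAt V (V' t) t)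
    (hineq : ∀ t ∈ Set.Ico 0 T, V' t ≤ φ t * (-a * V t) + b * |d t|)
    (hint : Tendsto (fun t => ∫ s in (0:ℝ)..t, φ s) (nhdsWithin T (Set.Iio T)) atTop) :
    Tendsto V (nhdsWithin T (Set.Iio T)) (nhds 0) := by
  have hnear : ∀ᶠ t in 𝓝[<] T, t ∈ Ioo 0 T := Ioo_mem_nhdsLT hT
  refine tendsto_order.2 ⟨fun c hc => ?_, fun c hc => ?_⟩
  · filter_upwards [hnear] with t ht
    exact hc.trans_le (hVnn t (Ioo_subset_Ico_self ht))
  · have hpos : 0 < a * φ₀ * (c / 2) := by positivity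
    have hdsmall : ∀ᶠ t in 𝓝[<] T, b * |d t| ≤ a * φ₀ * (c / 2) := by
      have : Tendsto (fun t => b * |d t|) (𝓝[<] T) (𝓝 0) := by
        simpa using (hd0.abs.const_mul b)
      exact this.eventually (ge_mem_nhds hpos)
    refine eventually_lt_of_deriv_le_neg_mul_sub (V' := V') (φ := φ) ha (half_lt_self hc) ?_ hint
    filter_upwards [hnear, hdsmall] with t ht hdt
    have ht' : t ∈ Ico 0 T := Ioo_subset_Ico_self ht
    refine ⟨hderiv t ht', hasDerivAt_integral_of_continuousOn_Ico hφcont ht, ?_⟩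
    have hφt : a * φ₀ * (c / 2) ≤ a * φ t * (c / 2) := by
      gcongr
      exact hφlb t ht'
    linarith [hineq t ht']

theorem stmt8 (T a b φ₀ M : ℝ) (hT : 0 < T) (ha : 0 < a) (hφ₀ : 0 < φ₀)
    (φ V V' d : ℝ → ℝ)
    (hφcont : ContinuousOn φ (Set.Ico 0 T))
    (hφlb : ∀ t ∈ Set.Ico 0 T, φ₀ ≤ φ t)
    (hVnn : ∀ t ∈ Set.Ico 0 T, 0 ≤ V t)
    (hd : Measurable d) (hdbd : ∀ t ∈ Set.Ico 0 T, |d t| ≤ M)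
    (hd0 : Tendsto d (nhdsWithin T (Set.Iio T)) (nhds 0))
    (hderiv : ∀ t ∈ Set.Ico 0 T, HasDerivAt V (V' t) t)
    (hineq : ∀ t ∈ Set.Ico 0 T, V' t ≤ φ t * (-a * V t) + b * |d t|)
    (hint : Tendsto (fun t => ∫ s in (0:ℝ)..t, φ s) (nhdsWithin T (Set.Iio T)) atTop) :
    Tendsto V (nhdsWithin T (Set.Iio T)) (nhds 0) :=
  stmt8_general T a b φ₀ hT ha hφ₀ φ V V' d hφcont hφlb hVnn hd0 hderiv hineq hint
end

section
/- Let T > 0, a > 0, b ≥ 0, φ : [0,T) → ℝ continuous nonnegative with ∫₀ᵗ φ(s) ds → ∞ as t → T⁻, d : [0,T) → ℝ bounded, and V : [0,T) → [0,∞) differentiable with V'(t) ≤ φ(t)·(-a·V(t) + b·|d(t)|). Then V(t) ≤ V(0)·exp(-a·∫₀ᵗ φ(s) ds) + (b/a)·sup_{s∈[0,t)} |d(s)| for all t ∈ [0,T). -/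
open Filter Set

theorem stmt9 (T a b M : ℝ) (hT : 0 < T) (ha : 0 < a) (hb : 0 ≤ b)
    (φ V V' d : ℝ → ℝ)
    (hφcont : ContinuousOn φ (Set.Ico 0 T))
    (hφnn : ∀ t ∈ Set.Ico 0 T, 0 ≤ φ t)
    (hint : Tendsto (fun t => ∫ s in (0:ℝ)..t, φ s) (nhdsWithin T (Set.Iio T)) atTop)
    (hdbd : ∀ t ∈ Set.Ico 0 T, |d t| ≤ M)
    (hVnn : ∀ t ∈ Set.Ico 0 T, 0 ≤ V t)
    (hderiv : ∀ t ∈ Set.Ico 0 T, HasDerivAt V (V' t) t)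
    (hineq : ∀ t ∈ Set.Ico 0 T, V' t ≤ φ t * (-a * V t + b * |d t|)) :
    ∀ t ∈ Set.Ico 0 T,
      V t ≤ V 0 * Real.exp (-a * ∫ s in (0:ℝ)..t, φ s)
            + (b / a) * sSup ((fun s => |d s|) '' Set.Ico 0 t) := by
  intro t ht
  obtain ⟨ht0, htT⟩ := ht
  rcases eq_or_lt_of_le ht0 with h0 | htpos
  · simp [← h0, Real.sSup_empty]
  set Φ : ℝ → ℝ := fun s => ∫ u in (0:ℝ)..s, φ u with hΦdef
  set S : ℝ := sSup ((fun s => |d s|) '' Set.Ico 0 t) with hSdef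
  have hsub : Set.Icc 0 t ⊆ Set.Ico 0 T := fun s hs => ⟨hs.1, lt_of_le_of_lt hs.2 htT⟩
  have hsub' : Set.Ico 0 t ⊆ Set.Ico 0 T := fun s hs => ⟨hs.1, lt_trans hs.2 htT⟩
  have hbdd : BddAbove ((fun s => |d s|) '' Set.Ico 0 t) := by
    refine ⟨M, ?_⟩
    rintro _ ⟨s, hs, rfl⟩
    exact hdbd s (hsub' hs)
  have hSle : ∀ s ∈ Set.Ico 0 t, |d s| ≤ S := fun s hs =>
    le_csSup hbdd (Set.mem_image_of_mem _ hs)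
  have hS0 : 0 ≤ S := le_trans (abs_nonneg (d 0)) (hSle 0 ⟨le_refl 0, htpos⟩)
  -- integrability of φ
  have hφint : MeasureTheory.IntegrableOn φ (Set.uIcc 0 t) := by
    rw [Set.uIcc_of_le ht0]
    exact (hφcont.mono hsub).integrableOn_Icc
  have hΦcont : ContinuousOn Φ (Set.Icc 0 t) := by
    have := intervalIntegral.continuousOn_primitive_interval hφint
    rwa [Set.uIcc_of_le ht0] at this
  have hΦder : ∀ s ∈ Set.Ioo 0 t, HasDerivAt Φ (φ s) s := by
    intro s hs
    have hsT : s ∈ Set.Ioo 0 T := ⟨hs.1, lt_trans hs.2 htT⟩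
    have hopen : IsOpen (Set.Ioo (0:ℝ) T) := isOpen_Ioo
    have hco : ContinuousOn φ (Set.Ioo 0 T) := hφcont.mono Set.Ioo_subset_Ico_self
    refine intervalIntegral.integral_hasDerivAt_right ?_ ?_ ?_
    · refine (hφint.mono_set ?_).intervalIntegrable
      rw [Set.uIcc_of_le ht0, Set.uIcc_of_le hs.1.le]
      exact Set.Icc_subset_Icc le_rfl hs.2.le
    · exact ⟨Set.Ioo 0 T, hopen.mem_nhds hsT, hco.aestronglyMeasurable hopen.measurableSet⟩
    · exact hco.continuousAt (hopen.mem_nhds hsT)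
  -- the auxiliary function
  set g : ℝ → ℝ := fun s => (V s - b / a * S) * Real.exp (a * Φ s) with hgdef
  have hganti : AntitoneOn g (Set.Icc 0 t) := by
    have hint2 : interior (Set.Icc (0:ℝ) t) = Set.Ioo 0 t := interior_Icc
    refine antitoneOn_of_hasDerivWithinAt_nonpos (convex_Icc 0 t) ?_
      (f' := fun s => V' s * Real.exp (a * Φ s)
        + (V s - b / a * S) * (Real.exp (a * Φ s) * (a * φ s))) ?_ ?_
    · have hVc : ContinuousOn V (Set.Icc 0 t) := fun s hs =>
        ((hderiv s (hsub hs)).continuousAt).continuousWithinAt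
      exact (hVc.sub continuousOn_const).mul ((hΦcont.const_smul a).rexp)
    · intro s hs
      rw [hint2] at hs ⊢
      have hd : HasDerivAt g (V' s * Real.exp (a * Φ s)
          + (V s - b / a * S) * (Real.exp (a * Φ s) * (a * φ s))) s := by
        exact ((hderiv s (hsub ⟨hs.1.le, hs.2.le⟩)).sub_const _).mul
          (((hΦder s hs).const_mul a).exp)
      exact hd.hasDerivWithinAt
    · intro s hs
      rw [hint2] at hs
      have hsmem : s ∈ Set.Ico 0 T := hsub ⟨hs.1.le, hs.2.le⟩
      have h1 : V' s ≤ φ s * (-a * V s + b * |d s|) := hineq s hsmem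
      have h2 : |d s| ≤ S := hSle s ⟨hs.1.le, hs.2⟩
      have hφs : 0 ≤ φ s := hφnn s hsmem
      have hE : 0 < Real.exp (a * Φ s) := Real.exp_pos _
      have hba : a * (b / a) = b := by field_simp
      have hrw : (V s - b / a * S) * (Real.exp (a * Φ s) * (a * φ s))
          = a * V s * (φ s * Real.exp (a * Φ s))
            - b * S * (φ s * Real.exp (a * Φ s)) := by
        field_simp
      show V' s * Real.exp (a * Φ s)
        + (V s - b / a * S) * (Real.exp (a * Φ s) * (a * φ s)) ≤ 0
      rw [hrw]
      nlinarith [mul_le_mul_of_nonneg_right h1 hE.le,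
        mul_le_mul_of_nonneg_left h2 (mul_nonneg hb (mul_nonneg hφs hE.le))]
  have hkey : g t ≤ g 0 := hganti (Set.left_mem_Icc.2 ht0)
    (Set.right_mem_Icc.2 ht0) ht0
  have hΦ0 : Φ 0 = 0 := intervalIntegral.integral_same
  rw [hgdef] at hkey
  simp only [hΦ0, mul_zero, Real.exp_zero, mul_one] at hkey
  have hE : 0 < Real.exp (a * Φ t) := Real.exp_pos _
  have hE' : 0 < Real.exp (-a * Φ t) := Real.exp_pos _
  have hEE' : Real.exp (a * Φ t) * Real.exp (-a * Φ t) = 1 := by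
    rw [← Real.exp_add]; ring_nf; exact Real.exp_zero
  have hcS : 0 ≤ b / a * S := mul_nonneg (div_nonneg hb ha.le) hS0
  have h3 : V t - b / a * S ≤ (V 0 - b / a * S) * Real.exp (-a * Φ t) := by
    calc V t - b / a * S
        = (V t - b / a * S) * Real.exp (a * Φ t) * Real.exp (-a * Φ t) := by
          rw [mul_assoc, hEE', mul_one]
      _ ≤ (V 0 - b / a * S) * Real.exp (-a * Φ t) :=
          mul_le_mul_of_nonneg_right hkey hE'.le
  show V t ≤ V 0 * Real.exp (-a * Φ t) + b / a * S
  nlinarith [mul_nonneg hcS hE'.le]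
end

section
/- Let A be an n×n real matrix such that there exists a positive diagonal matrix P with -(P·A + Aᵀ·P) positive definite (i.e., A is Lyapunov diagonally stable). Then there exists a row vector q with all entries strictly positive and a constant y > 0 such that q·A ≤ -y·q entrywise. -/
open Matrix Finset

theorem stmt11 (n : ℕ) (hn : 0 < n) (A : Matrix (Fin n) (Fin n) ℝ)
    (dP : Fin n → ℝ) (hdP : ∀ i, 0 < dP i)
    (hLDS : (-(Matrix.diagonal dP * A + Aᵀ * Matrix.diagonal dP)).PosDef) :
    ∃ (q : Fin n → ℝ) (y : ℝ), 0 < y ∧ (∀ i, 0 < q i) ∧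
      ∀ j, (q ᵥ* A) j ≤ -y * q j := by
  classical
  set P := Matrix.diagonal dP with hP
  -- the compact convex set: image of the standard simplex under A
  set C : Set (Fin n → ℝ) := (fun y => A *ᵥ y) '' stdSimplex ℝ (Fin n) with hC
  set D : Set (Fin n → ℝ) := {z | ∀ i, 0 ≤ z i} with hD
  have hCconv : Convex ℝ C := (convex_stdSimplex ℝ (Fin n)).linear_image A.mulVecLin
  have hCcomp : IsCompact C :=
    (isCompact_stdSimplex ℝ (Fin n)).image A.mulVecLin.continuous_of_finiteDimensional
  have hDconv : Convex ℝ D := by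
    intro x hx y hy a b ha hb hab i
    exact add_nonneg (mul_nonneg ha (hx i)) (mul_nonneg hb (hy i))
  have hDclosed : IsClosed D := by
    have : D = ⋂ i, {z : Fin n → ℝ | 0 ≤ z i} := by
      ext z; simp [hD, Set.mem_iInter]
    rw [this]
    exact isClosed_iInter fun i => isClosed_le continuous_const (continuous_apply i)
  -- disjointness from positive definiteness
  have hdisj : Disjoint C D := by
    rw [Set.disjoint_left]
    rintro z ⟨y, hy, rfl⟩ hz
    have hy0 : y ≠ 0 := by
      intro h
      have := hy.2
      rw [h] at this
      simp at this
    have hpos := hLDS.dotProduct_mulVec_pos hy0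
    have hq1 : 0 ≤ y ⬝ᵥ (P *ᵥ (A *ᵥ y)) := by
      apply Finset.sum_nonneg
      intro i _
      simp only [hP, mulVec_diagonal]
      exact mul_nonneg (hy.1 i) (mul_nonneg (hdP i).le (hz i))
    have hq2 : 0 ≤ y ⬝ᵥ (Aᵀ *ᵥ (P *ᵥ y)) := by
      rw [dotProduct_mulVec, vecMul_transpose]
      apply Finset.sum_nonneg
      intro i _
      simp only [hP, mulVec_diagonal]
      exact mul_nonneg (hz i) (mul_nonneg (hdP i).le (hy.1 i))
    have hcalc : y ⬝ᵥ ((-(P * A + Aᵀ * P)) *ᵥ y)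
        = -(y ⬝ᵥ (P *ᵥ (A *ᵥ y)) + y ⬝ᵥ (Aᵀ *ᵥ (P *ᵥ y))) := by
      rw [neg_mulVec, dotProduct_neg, add_mulVec, dotProduct_add, mulVec_mulVec, mulVec_mulVec]
    rw [show star y = y from rfl] at hpos
    rw [hcalc] at hpos
    linarith
  obtain ⟨f, u, v, hfu, huv, hfv⟩ :=
    geometric_hahn_banach_compact_closed hCconv hCcomp hDconv hDclosed hdisj
  have hv0 : v < 0 := by
    have := hfv 0 (fun i => le_refl 0)
    simpa using this
  have hu0 : u < 0 := huv.trans hv0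
  -- f is nonnegative on D
  have hfD : ∀ z ∈ D, 0 ≤ f z := by
    intro z hz
    by_contra h
    push_neg at h
    have ht : (0 : ℝ) < v / f z := div_pos_of_neg_of_neg hv0 h
    have hmem : (v / f z) • z ∈ D := fun i => mul_nonneg ht.le (hz i)
    have := hfv _ hmem
    rw [f.map_smul] at this
    simp only [smul_eq_mul] at this
    rw [div_mul_cancel₀ v (ne_of_lt h)] at this
    exact lt_irrefl v this
  set q0 : Fin n → ℝ := fun i => f (fun j => if i = j then 1 else 0) with hq0
  have hq0nn : ∀ i, 0 ≤ q0 i := by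
    intro i
    apply hfD
    intro j
    dsimp only
    split <;> norm_num
  have hfrep : ∀ z : Fin n → ℝ, f z = ∑ i, z i * q0 i := by
    intro z
    have := LinearMap.pi_apply_eq_sum_univ (f : (Fin n → ℝ) →ₗ[ℝ] ℝ) z
    simpa [smul_eq_mul] using this
  -- columns of A are in C
  have hcol : ∀ i, (q0 ᵥ* A) i < u := by
    intro i
    have hmem : (A *ᵥ Pi.single i 1) ∈ C :=
      ⟨Pi.single i 1, single_mem_stdSimplex ℝ i, rfl⟩
    have := hfu _ hmem
    rw [hfrep] at this
    have heq : ∑ j, (A *ᵥ Pi.single i 1) j * q0 j = (q0 ᵥ* A) i := by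
      simp [mulVec_single, vecMul, dotProduct, mul_comm]
    rwa [heq] at this
  -- perturb to strict positivity
  set B : Fin n → ℝ := fun i => ∑ j, A j i with hB
  have hne : (Finset.univ : Finset (Fin n)).Nonempty := by
    simpa [Finset.univ_nonempty_iff] using Fin.pos_iff_nonempty.mp hn
  set M : ℝ := Finset.univ.sup' hne (fun i => |B i|) with hM
  have hM0 : 0 ≤ M := by
    obtain ⟨i, hi⟩ := hne
    exact le_trans (abs_nonneg (B i)) (Finset.le_sup' (fun i => |B i|) hi)
  set δ : ℝ := (-u) / (2 * (M + 1)) with hδ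
  have hδpos : 0 < δ := div_pos (by linarith) (by linarith)
  set q : Fin n → ℝ := fun i => q0 i + δ with hq
  have hqpos : ∀ i, 0 < q i := fun i => by
    have := hq0nn i; simp only [hq]; linarith
  have hqA : ∀ i, (q ᵥ* A) i < 0 := by
    intro i
    have hsplit : (q ᵥ* A) i = (q0 ᵥ* A) i + δ * B i := by
      simp only [hq, hB, vecMul, dotProduct, add_mul, Finset.sum_add_distrib, Finset.mul_sum]
    have h1 : δ * B i ≤ δ * |B i| := mul_le_mul_of_nonneg_left (le_abs_self _) hδpos.le
    have h2 : |B i| ≤ M := Finset.le_sup' (fun i => |B i|) (Finset.mem_univ i)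
    have h3 : δ * M ≤ -u / 2 := by
      rw [hδ]
      rw [div_mul_eq_mul_div, div_le_div_iff₀ (by linarith) (by norm_num)]
      nlinarith
    have := hcol i
    rw [hsplit]
    nlinarith [mul_le_mul_of_nonneg_left h2 hδpos.le]
  -- final y
  set y : ℝ := Finset.univ.inf' hne (fun i => (-(q ᵥ* A) i) / q i) with hy
  refine ⟨q, y, ?_, hqpos, ?_⟩
  · apply (Finset.lt_inf'_iff hne).mpr
    intro i _
    exact div_pos (by linarith [hqA i]) (hqpos i)
  · intro j
    have hle : y ≤ (-(q ᵥ* A) j) / q j := Finset.inf'_le _ (Finset.mem_univ j)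
    have := (le_div_iff₀ (hqpos j)).mp hle
    linarith
end

section
/- Let T > 0, φ : [0,T) → ℝ continuous nonnegative with ∫₀ᵗ φ(s) ds → ∞ as t → T⁻. Let V₁, V₂ : [0,T) → [0,∞) be differentiable with V₁'(t) ≤ -φ(t)·V₁(t) and V₂'(t) ≤ φ(t)·(-a·V₂(t) + b·V₁(t)), where a > 0, b > 0. Then there exist positive constants c₁, c₂, κ such that V(t) := c₁V₁(t) + c₂V₂(t) satisfies V'(t) ≤ -κ·φ(t)·V(t), and consequently V₁(t) → 0 and V₂(t) → 0 as t → T⁻. -/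
open Filter Set

theorem stmt13 (T a b : ℝ) (hT : 0 < T) (ha : 0 < a) (hb : 0 < b)
    (φ V₁ V₁' V₂ V₂' : ℝ → ℝ)
    (hφcont : ContinuousOn φ (Set.Ico 0 T))
    (hφnn : ∀ t ∈ Set.Ico 0 T, 0 ≤ φ t)
    (hint : Tendsto (fun t => ∫ s in (0:ℝ)..t, φ s) (nhdsWithin T (Set.Iio T)) atTop)
    (hV₁nn : ∀ t ∈ Set.Ico 0 T, 0 ≤ V₁ t) (hV₂nn : ∀ t ∈ Set.Ico 0 T, 0 ≤ V₂ t)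
    (hderiv₁ : ∀ t ∈ Set.Ico 0 T, HasDerivAt V₁ (V₁' t) t)
    (hderiv₂ : ∀ t ∈ Set.Ico 0 T, HasDerivAt V₂ (V₂' t) t)
    (hineq₁ : ∀ t ∈ Set.Ico 0 T, V₁' t ≤ -φ t * V₁ t)
    (hineq₂ : ∀ t ∈ Set.Ico 0 T, V₂' t ≤ φ t * (-a * V₂ t + b * V₁ t)) :
    (∃ c₁ c₂ κ : ℝ, 0 < c₁ ∧ 0 < c₂ ∧ 0 < κ ∧
      ∀ t ∈ Set.Ico 0 T,
        c₁ * V₁' t + c₂ * V₂' t ≤ -κ * φ t * (c₁ * V₁ t + c₂ * V₂ t)) ∧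
    Tendsto V₁ (nhdsWithin T (Set.Iio T)) (nhds 0) ∧
    Tendsto V₂ (nhdsWithin T (Set.Iio T)) (nhds 0) := by
  set c₁ : ℝ := 2 * b with hc₁def
  set c₂ : ℝ := 1 with hc₂def
  set κ : ℝ := min (1/2) a with hκdef
  have hc₁ : 0 < c₁ := by positivity
  have hc₂ : (0:ℝ) < c₂ := one_pos
  have hκ : 0 < κ := lt_min (by norm_num) ha
  have hκhalf : κ ≤ 1/2 := min_le_left _ _
  have hκa : κ ≤ a := min_le_right _ _
  -- the main differential inequality
  have key : ∀ t ∈ Set.Ico 0 T,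
      c₁ * V₁' t + c₂ * V₂' t ≤ -κ * φ t * (c₁ * V₁ t + c₂ * V₂ t) := by
    intro t ht
    have h1 := hineq₁ t ht
    have h2 := hineq₂ t ht
    have hφ := hφnn t ht
    have h1n := hV₁nn t ht
    have h2n := hV₂nn t ht
    have step : c₁ * V₁' t + c₂ * V₂' t ≤ φ t * (-b * V₁ t - a * V₂ t) := by
      have hA : c₁ * V₁' t ≤ c₁ * (-φ t * V₁ t) := mul_le_mul_of_nonneg_left h1 hc₁.le
      have hB : c₂ * V₂' t ≤ c₂ * (φ t * (-a * V₂ t + b * V₁ t)) :=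
        mul_le_mul_of_nonneg_left h2 hc₂.le
      calc c₁ * V₁' t + c₂ * V₂' t
          ≤ c₁ * (-φ t * V₁ t) + c₂ * (φ t * (-a * V₂ t + b * V₁ t)) := add_le_add hA hB
        _ = φ t * (-b * V₁ t - a * V₂ t) := by rw [hc₁def, hc₂def]; ring
    refine step.trans ?_
    have hlin : κ * (c₁ * V₁ t + c₂ * V₂ t) ≤ b * V₁ t + a * V₂ t := by
      have h3 : κ * (c₁ * V₁ t) ≤ b * V₁ t := by
        rw [hc₁def]
        nlinarith [mul_nonneg hb.le h1n]
      have h4 : κ * (c₂ * V₂ t) ≤ a * V₂ t := by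
        rw [hc₂def]
        nlinarith
      calc κ * (c₁ * V₁ t + c₂ * V₂ t) = κ * (c₁ * V₁ t) + κ * (c₂ * V₂ t) := by ring
        _ ≤ b * V₁ t + a * V₂ t := add_le_add h3 h4
    nlinarith [mul_le_mul_of_nonneg_left hlin hφ]
  refine ⟨⟨c₁, c₂, κ, hc₁, hc₂, hκ, key⟩, ?_⟩
  -- notation
  set V : ℝ → ℝ := fun t => c₁ * V₁ t + c₂ * V₂ t with hVdef
  set Φ : ℝ → ℝ := fun t => ∫ s in (0:ℝ)..t, φ s with hΦdef
  have hVnn : ∀ t ∈ Set.Ico 0 T, 0 ≤ V t := fun t ht => by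
    have := hV₁nn t ht; have := hV₂nn t ht; positivity
  have hVderiv : ∀ t ∈ Set.Ico 0 T, HasDerivAt V (c₁ * V₁' t + c₂ * V₂' t) t := by
    intro t ht
    exact ((hderiv₁ t ht).const_mul c₁).add ((hderiv₂ t ht).const_mul c₂)
  have hφint : ∀ t ∈ Set.Ico 0 T, IntervalIntegrable φ MeasureTheory.volume 0 t := by
    intro t ht
    apply ContinuousOn.intervalIntegrable
    apply hφcont.mono
    rw [Set.uIcc_of_le ht.1]
    exact fun x hx => ⟨hx.1, lt_of_le_of_lt hx.2 ht.2⟩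
  have hΦderiv : ∀ t ∈ Set.Ioo 0 T, HasDerivAt Φ (φ t) t := by
    intro t ht
    have htm : Set.Ico 0 T ∈ nhds t :=
      mem_nhds_iff.2 ⟨Set.Ioo 0 T, Set.Ioo_subset_Ico_self, isOpen_Ioo, ht⟩
    have hca : ContinuousAt φ t := hφcont.continuousAt htm
    exact intervalIntegral.integral_hasDerivAt_right
      (hφint t ⟨ht.1.le, ht.2⟩)
      (ContinuousOn.stronglyMeasurableAtFilter isOpen_Ioo
        (hφcont.mono Set.Ioo_subset_Ico_self) t ht) hca
  -- the Grönwall-type estimate: V t * exp (κ * Φ t) ≤ V 0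
  set W : ℝ → ℝ := fun t => V t * Real.exp (κ * Φ t) with hWdef
  have hW0 : W 0 = V 0 := by
    simp [hWdef, hΦdef, intervalIntegral.integral_same]
  have hWle : ∀ t ∈ Set.Ico 0 T, W t ≤ V 0 := by
    intro t ht
    rcases eq_or_lt_of_le ht.1 with h0 | h0
    · rw [← h0, hW0]
    have hsub : Set.Icc 0 t ⊆ Set.Ico 0 T := fun x hx => ⟨hx.1, lt_of_le_of_lt hx.2 ht.2⟩
    have hint2 : IntervalIntegrable φ MeasureTheory.volume (min 0 0) (max 0 t) := by
      rw [min_self, max_eq_right ht.1]; exact hφint t ht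
    have hΦcont : ContinuousOn Φ (Set.Icc 0 t) := by
      intro x hx
      exact intervalIntegral.continuousWithinAt_primitive (by simp) hint2
    have hVcont : ContinuousOn V (Set.Icc 0 t) := fun x hx =>
      ((hVderiv x (hsub hx)).continuousAt).continuousWithinAt
    have hWcont : ContinuousOn W (Set.Icc 0 t) :=
      hVcont.mul ((Real.continuous_exp.comp_continuousOn (hΦcont.const_smul κ)))
    have hWderiv : ∀ x ∈ Set.Ioo 0 t, HasDerivAt W
        ((c₁ * V₁' x + c₂ * V₂' x) * Real.exp (κ * Φ x)
          + V x * (κ * φ x * Real.exp (κ * Φ x))) x := by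
      intro x hx
      have hxI : x ∈ Set.Ioo 0 T := ⟨hx.1, lt_of_lt_of_le hx.2 ht.2.le⟩
      have h1 := hVderiv x ⟨hxI.1.le, hxI.2⟩
      have h2 : HasDerivAt (fun u => Real.exp (κ * Φ u)) (κ * φ x * Real.exp (κ * Φ x)) x := by
        have := (((hΦderiv x hxI).const_mul κ).exp)
        convert this using 1; ring
      exact h1.mul h2
    have hanti : AntitoneOn W (Set.Icc 0 t) := by
      apply antitoneOn_of_deriv_nonpos (convex_Icc 0 t) hWcont
      · intro x hx
        rw [interior_Icc] at hx
        exact (hWderiv x hx).differentiableAt.differentiableWithinAt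
      · intro x hx
        rw [interior_Icc] at hx
        rw [(hWderiv x hx).deriv]
        have hxI : x ∈ Set.Ico 0 T := ⟨hx.1.le, lt_of_lt_of_le hx.2 ht.2.le⟩
        have hk := key x hxI
        have hexp : (0:ℝ) < Real.exp (κ * Φ x) := Real.exp_pos _
        simp only [hVdef]
        nlinarith [mul_le_mul_of_nonneg_right hk hexp.le]
    have := hanti (Set.left_mem_Icc.2 ht.1) (Set.right_mem_Icc.2 ht.1) ht.1
    rwa [hW0] at this
  -- conclude: V t ≤ V 0 * exp (-κ * Φ t)
  have hbound : ∀ t ∈ Set.Ico 0 T, V t ≤ V 0 * Real.exp (-κ * Φ t) := by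
    intro t ht
    have hW := hWle t ht
    have hexp : (0:ℝ) < Real.exp (κ * Φ t) := Real.exp_pos _
    rw [neg_mul, Real.exp_neg, ← div_eq_mul_inv, le_div_iff₀ hexp]
    exact hW
  have hmem : Set.Ico 0 T ∈ nhdsWithin T (Set.Iio T) := by
    apply mem_nhdsWithin.2
    exact ⟨Set.Ioi 0, isOpen_Ioi, hT, fun x hx => ⟨le_of_lt hx.1, hx.2⟩⟩
  have hbot : Tendsto (fun t => -κ * Φ t) (nhdsWithin T (Set.Iio T)) atBot := by
    have := Tendsto.const_mul_atTop (show (0:ℝ) < κ from hκ) hint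
    have hneg : Tendsto (fun t => -(κ * Φ t)) (nhdsWithin T (Set.Iio T)) atBot :=
      tendsto_neg_atBot_iff.2 this
    simpa [neg_mul] using hneg
  have htend0 : Tendsto (fun t => V 0 * Real.exp (-κ * Φ t)) (nhdsWithin T (Set.Iio T)) (nhds 0) := by
    have := (Real.tendsto_exp_atBot.comp hbot).const_mul (V 0)
    simpa using this
  have hVtend : Tendsto V (nhdsWithin T (Set.Iio T)) (nhds 0) := by
    apply squeeze_zero' (eventually_of_mem hmem hVnn)
      (eventually_of_mem hmem hbound) htend0
  have hb₁ : ∀ t ∈ Set.Ico 0 T, V₁ t ≤ (1/c₁) * V t := by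
    intro t ht
    have h2n := hV₂nn t ht
    have heq : (1/c₁) * V t = V₁ t + (c₂/c₁) * V₂ t := by
      simp only [hVdef]
      field_simp
    have hpos : 0 ≤ (c₂/c₁) * V₂ t := mul_nonneg (div_nonneg hc₂.le hc₁.le) h2n
    linarith
  have hb₂ : ∀ t ∈ Set.Ico 0 T, V₂ t ≤ (1/c₂) * V t := by
    intro t ht
    have h1n := hV₁nn t ht
    have heq : (1/c₂) * V t = V₂ t + (c₁/c₂) * V₁ t := by
      simp only [hVdef]
      field_simp
      ring
    have hpos : 0 ≤ (c₁/c₂) * V₁ t := mul_nonneg (div_nonneg hc₁.le hc₂.le) h1n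
    linarith
  constructor
  · apply squeeze_zero' (eventually_of_mem hmem hV₁nn) (eventually_of_mem hmem hb₁)
    simpa using hVtend.const_mul (1/c₁)
  · apply squeeze_zero' (eventually_of_mem hmem hV₂nn) (eventually_of_mem hmem hb₂)
    simpa using hVtend.const_mul (1/c₂)
end

section
/- Let T > 0, φ : [0,T) → ℝ continuous nonnegative with ∫₀ᵗ φ(s) ds → ∞ as t → T⁻. Let V₁, V₂ : [0,T) → [0,∞) be differentiable with V₁'(t) ≤ φ(t)·(-a₁V₁(t) + b₁V₂(t)) and V₂'(t) ≤ φ(t)·(-a₂V₂(t) + b₂V₁(t)), where a₁, a₂, b₁, b₂ > 0 and a₁a₂ > b₁b₂. Then there exist positive constants c₁, c₂, κ such that V := c₁V₁ + c₂V₂ satisfies V'(t) ≤ -κ·φ(t)·V(t); hence V₁(t) → 0 and V₂(t) → 0 as t → T⁻. -/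
open Filter Set

theorem stmt14 (T a₁ a₂ b₁ b₂ : ℝ) (hT : 0 < T)
    (ha₁ : 0 < a₁) (ha₂ : 0 < a₂) (hb₁ : 0 < b₁) (hb₂ : 0 < b₂)
    (hab : b₁ * b₂ < a₁ * a₂)
    (φ V₁ V₁' V₂ V₂' : ℝ → ℝ)
    (hφcont : ContinuousOn φ (Set.Ico 0 T))
    (hφnn : ∀ t ∈ Set.Ico 0 T, 0 ≤ φ t)
    (hint : Tendsto (fun t => ∫ s in (0:ℝ)..t, φ s) (nhdsWithin T (Set.Iio T)) atTop)
    (hV₁nn : ∀ t ∈ Set.Ico 0 T, 0 ≤ V₁ t) (hV₂nn : ∀ t ∈ Set.Ico 0 T, 0 ≤ V₂ t)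
    (hderiv₁ : ∀ t ∈ Set.Ico 0 T, HasDerivAt V₁ (V₁' t) t)
    (hderiv₂ : ∀ t ∈ Set.Ico 0 T, HasDerivAt V₂ (V₂' t) t)
    (hineq₁ : ∀ t ∈ Set.Ico 0 T, V₁' t ≤ φ t * (-a₁ * V₁ t + b₁ * V₂ t))
    (hineq₂ : ∀ t ∈ Set.Ico 0 T, V₂' t ≤ φ t * (-a₂ * V₂ t + b₂ * V₁ t)) :
    (∃ c₁ c₂ κ : ℝ, 0 < c₁ ∧ 0 < c₂ ∧ 0 < κ ∧
      ∀ t ∈ Set.Ico 0 T,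
        c₁ * V₁' t + c₂ * V₂' t ≤ -κ * φ t * (c₁ * V₁ t + c₂ * V₂ t)) ∧
    Tendsto V₁ (nhdsWithin T (Set.Iio T)) (nhds 0) ∧
    Tendsto V₂ (nhdsWithin T (Set.Iio T)) (nhds 0) := by
  -- Choice of constants
  have hdlt : b₂ / a₁ < a₂ / b₁ := by
    rw [div_lt_div_iff₀ ha₁ hb₁]; nlinarith
  set c₁ : ℝ := (b₂ / a₁ + a₂ / b₁) / 2 with hc₁def
  have hc₁pos : 0 < c₁ := by
    have : 0 < b₂ / a₁ := div_pos hb₂ ha₁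
    have : 0 < a₂ / b₁ := div_pos ha₂ hb₁
    positivity
  have hlt1 : b₂ / a₁ < c₁ := by rw [hc₁def]; linarith
  have hlt2 : c₁ < a₂ / b₁ := by rw [hc₁def]; linarith
  have hA : 0 < a₁ * c₁ - b₂ := by
    rw [div_lt_iff₀ ha₁] at hlt1; nlinarith
  have hB : 0 < a₂ - b₁ * c₁ := by
    rw [lt_div_iff₀ hb₁] at hlt2; nlinarith
  set κ : ℝ := min ((a₁ * c₁ - b₂) / c₁) (a₂ - b₁ * c₁) with hκdef
  have hκpos : 0 < κ := lt_min (div_pos hA hc₁pos) hB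
  have hκ1 : κ * c₁ ≤ a₁ * c₁ - b₂ := by
    have := min_le_left ((a₁ * c₁ - b₂) / c₁) (a₂ - b₁ * c₁)
    rw [le_div_iff₀ hc₁pos] at this
    linarith [this]
  have hκ2 : κ ≤ a₂ - b₁ * c₁ := min_le_right _ _
  -- The main differential inequality for W = c₁ V₁ + V₂
  have main : ∀ t ∈ Set.Ico 0 T,
      c₁ * V₁' t + 1 * V₂' t ≤ -κ * φ t * (c₁ * V₁ t + 1 * V₂ t) := by
    intro t ht
    have h1 := hineq₁ t ht
    have h2 := hineq₂ t ht
    have hφ := hφnn t ht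
    have hv1 := hV₁nn t ht
    have hv2 := hV₂nn t ht
    nlinarith [mul_le_mul_of_nonneg_left h1 hc₁pos.le,
      mul_nonneg (mul_nonneg hφ hv1) (by nlinarith : (0:ℝ) ≤ a₁ * c₁ - b₂ - κ * c₁),
      mul_nonneg (mul_nonneg hφ hv2) (by nlinarith : (0:ℝ) ≤ a₂ - b₁ * c₁ - κ)]
  -- Gronwall argument
  set W : ℝ → ℝ := fun t => c₁ * V₁ t + V₂ t with hWdef
  set F : ℝ → ℝ := fun t => ∫ s in (0:ℝ)..t, φ s with hFdef
  have hWnn : ∀ t ∈ Set.Ico 0 T, 0 ≤ W t := fun t ht =>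
    add_nonneg (mul_nonneg hc₁pos.le (hV₁nn t ht)) (hV₂nn t ht)
  have hWderiv : ∀ t ∈ Set.Ico 0 T, HasDerivAt W (c₁ * V₁' t + V₂' t) t := by
    intro t ht
    exact ((hderiv₁ t ht).const_mul c₁).add (hderiv₂ t ht)
  have key : ∀ t ∈ Set.Ico 0 T, W t ≤ W 0 * Real.exp (-(κ * F t)) := by
    intro t ht
    rcases eq_or_lt_of_le ht.1 with rfl | h0
    · have hF0 : F 0 = 0 := intervalIntegral.integral_same
      simp [hF0]
    -- 0 < t < T
    have hsub : Set.Icc (0:ℝ) t ⊆ Set.Ico 0 T := fun u hu =>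
      ⟨hu.1, lt_of_le_of_lt hu.2 ht.2⟩
    have hFderiv : ∀ u ∈ Set.Ioo (0:ℝ) t, HasDerivAt F (φ u) u := by
      intro u hu
      have huT : u ∈ Set.Ioo (0:ℝ) T := ⟨hu.1, lt_trans hu.2 ht.2⟩
      have hmem : Set.Ico (0:ℝ) T ∈ nhds u :=
        Filter.mem_of_superset (isOpen_Ioo.mem_nhds huT) Set.Ioo_subset_Ico_self
      have hφat : ContinuousAt φ u := hφcont.continuousAt hmem
      have hii : IntervalIntegrable φ MeasureTheory.volume 0 u := by
        apply ContinuousOn.intervalIntegrable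
        apply hφcont.mono
        rw [Set.uIcc_of_le (le_of_lt huT.1)]
        exact fun x hx => ⟨hx.1, lt_of_le_of_lt hx.2 huT.2⟩
      exact intervalIntegral.integral_hasDerivAt_right hii
        (ContinuousAt.stronglyMeasurableAtFilter isOpen_Ioo
          (fun x hx => hφcont.continuousAt
            (Filter.mem_of_superset (isOpen_Ioo.mem_nhds hx) Set.Ioo_subset_Ico_self))
          u huT) hφat
    have hFcont : ContinuousOn F (Set.Icc 0 t) := by
      have : Set.uIcc (0:ℝ) t = Set.Icc 0 t := Set.uIcc_of_le (le_of_lt h0)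
      rw [← this]
      exact intervalIntegral.continuousOn_primitive_interval
        ((hφcont.mono (this ▸ hsub)).integrableOn_compact (this ▸ isCompact_Icc))
    set g : ℝ → ℝ := fun u => W u * Real.exp (κ * F u) with hgdef
    have hgderiv : ∀ u ∈ Set.Ioo (0:ℝ) t, HasDerivAt g
        ((c₁ * V₁' u + V₂' u) * Real.exp (κ * F u)
          + W u * (κ * φ u * Real.exp (κ * F u))) u := by
      intro u hu
      have huIco : u ∈ Set.Ico 0 T := hsub ⟨le_of_lt hu.1, le_of_lt hu.2⟩
      have hE : HasDerivAt (fun v => Real.exp (κ * F v)) (κ * φ u * Real.exp (κ * F u)) u := by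
        have := (((hFderiv u hu).const_mul κ).exp)
        convert this using 1
        ring
      exact (hWderiv u huIco).mul hE
    have hanti : AntitoneOn g (Set.Icc 0 t) := by
      apply antitoneOn_of_deriv_nonpos (convex_Icc 0 t)
      · -- continuity of g
        apply ContinuousOn.mul
        · intro u hu
          exact ((hWderiv u (hsub hu)).continuousAt).continuousWithinAt
        · exact Real.continuous_exp.comp_continuousOn (continuousOn_const.mul hFcont)
      · rw [interior_Icc]
        exact fun u hu => ((hgderiv u hu).differentiableAt).differentiableWithinAt
      · rw [interior_Icc]
        intro u hu
        rw [(hgderiv u hu).deriv]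
        have huIco : u ∈ Set.Ico 0 T := hsub ⟨le_of_lt hu.1, le_of_lt hu.2⟩
        have hm := main u huIco
        have hE : (0:ℝ) < Real.exp (κ * F u) := Real.exp_pos _
        have hWu : W u = c₁ * V₁ u + V₂ u := rfl
        have h3 : (c₁ * V₁' u + V₂' u) * Real.exp (κ * F u)
            ≤ (-κ * φ u * W u) * Real.exp (κ * F u) := by
          apply mul_le_mul_of_nonneg_right _ hE.le
          rw [hWu]; linarith [hm]
        nlinarith [h3]
    have hg : g t ≤ g 0 := hanti (Set.left_mem_Icc.2 (le_of_lt h0))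
      (Set.right_mem_Icc.2 (le_of_lt h0)) (le_of_lt h0)
    have hF0 : F 0 = 0 := by rw [hFdef]; simp [intervalIntegral.integral_same]
    have hg0 : g 0 = W 0 := by rw [hgdef]; simp [hF0]
    have hEpos : (0:ℝ) < Real.exp (κ * F t) := Real.exp_pos _
    have hg' : W t * Real.exp (κ * F t) ≤ W 0 := by rw [← hg0]; exact hg
    rw [Real.exp_neg]
    calc W t = W t * Real.exp (κ * F t) * (Real.exp (κ * F t))⁻¹ := by
          field_simp
      _ ≤ W 0 * (Real.exp (κ * F t))⁻¹ :=
          mul_le_mul_of_nonneg_right hg' (inv_nonneg.2 hEpos.le)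
  -- limits
  have hexp : Tendsto (fun t => Real.exp (-(κ * F t))) (nhdsWithin T (Set.Iio T)) (nhds 0) :=
    Real.tendsto_exp_atBot.comp (tendsto_neg_atTop_atBot.comp (hint.const_mul_atTop hκpos))
  have hmem : Set.Ico (0:ℝ) T ∈ nhdsWithin T (Set.Iio T) := by
    have h1 : Set.Ioi (0:ℝ) ∈ nhdsWithin T (Set.Iio T) :=
      mem_nhdsWithin_of_mem_nhds (Ioi_mem_nhds hT)
    have h2 : Set.Iio T ∈ nhdsWithin T (Set.Iio T) := self_mem_nhdsWithin
    filter_upwards [h1, h2] with x hx1 hx2 using ⟨le_of_lt hx1, hx2⟩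
  refine ⟨⟨c₁, 1, κ, hc₁pos, one_pos, hκpos, main⟩, ?_, ?_⟩
  · -- V₁ → 0
    apply squeeze_zero' (g := fun t => (W 0 / c₁) * Real.exp (-(κ * F t)))
    · filter_upwards [hmem] with t ht using hV₁nn t ht
    · filter_upwards [hmem] with t ht
      have h1 := key t ht
      have h2 := hV₂nn t ht
      rw [show W t = c₁ * V₁ t + V₂ t from rfl] at h1
      rw [div_mul_eq_mul_div, le_div_iff₀ hc₁pos]
      nlinarith
    · have := hexp.const_mul (W 0 / c₁)
      simpa using this
  · -- V₂ → 0
    apply squeeze_zero' (g := fun t => W 0 * Real.exp (-(κ * F t)))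
    · filter_upwards [hmem] with t ht using hV₂nn t ht
    · filter_upwards [hmem] with t ht
      have h1 := key t ht
      have h2 := hV₁nn t ht
      rw [show W t = c₁ * V₁ t + V₂ t from rfl] at h1
      nlinarith [mul_nonneg hc₁pos.le h2]
    · have := hexp.const_mul (W 0)
      simpa using this
end

section
/- Let T > 0 and let φ₁, φ₂ : [0,T) → ℝ be nondecreasing differentiable functions with p₀·(T/(T-t))² ≤ φᵢ(t) ≤ p₂(T/(T-t)) for some p₀ > 0 and polynomial p₂ with nonnegative coefficients (i = 1,2). Let V₁, V₂ : [0,T) → [0,∞) be differentiable with V₁' ≤ φ₁·(-a₁V₁ + b₁V₂) and V₂' ≤ φ₂·(-a₂V₂ + b₂V₁), where a₁,a₂,b₁,b₂ > 0 and a₁a₂ > b₁b₂. Then there exist q₁, q₂ > 0 and δ > 0 such that W(t) := q₁·V₁(t)/φ₁(t) + q₂·V₂(t)/φ₂(t) satisfies W(t) ≤ W(0)·exp(-δ·∫₀ᵗ min{φ₁(s),φ₂(s)} ds), and consequently V₁(t) → 0 and V₂(t) → 0 as t → T⁻, with V₁ and V₂ prescribed-time exponentially convergent. -/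
/-!
Since `φᵢ` is nondecreasing, `(Vᵢ/φᵢ)' ≤ Vᵢ'/φᵢ`. Because `a₁a₂ > b₁b₂` there are `q, δ > 0` with
`(1, q) A ≤ -δ (1, q)` for `A = [[-a₁, b₁], [b₂, -a₂]]`, and then `W = V₁/φ₁ + q V₂/φ₂` satisfies
`W' ≤ -δ min(φ₁, φ₂) W`, whence `W t ≤ W 0 · exp (-δ ∫₀ᵗ min(φ₁, φ₂))`. Since
`∫₀ᵗ min(φ₁, φ₂) ≥ p₀ T (T/(T-t) - 1)`, half of this exponential decay absorbs the polynomial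
factor in `Vᵢ ≤ φᵢ W / qᵢ ≤ p₂(T/(T-t)) W / qᵢ`, and the other half is the prescribed-time
exponential convergence.
-/

open Filter Set

/-- A signal `q` on `[0,T)` is prescribed-time exponentially convergent (to zero). -/
def PTExpConv (T : ℝ) (q : ℝ → ℝ) : Prop :=
  ∃ (T' c p₀ : ℝ) (φ : ℝ → ℝ), 0 ≤ T' ∧ T' < T ∧ 0 < c ∧ 0 < p₀ ∧
    (∀ t ∈ Set.Ioo T' T, p₀ * (T / (T - t)) ^ 2 ≤ φ t) ∧
    (∀ t ∈ Set.Ioo T' T, |q t| ≤ c * Real.exp (-∫ s in T'..t, φ s))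

open Topology Real

theorem Polynomial.tendsto_eval_mul_exp_neg_mul_atTop (p : Polynomial ℝ) {κ : ℝ} (hκ : 0 < κ) :
    Tendsto (fun x => p.eval x * exp (-(κ * x))) atTop (𝓝 0) := by
  have h := (p.comp (Polynomial.C κ⁻¹ * Polynomial.X)).tendsto_div_exp_atTop.comp
    (tendsto_id.const_mul_atTop hκ)
  refine h.congr fun x => ?_
  simp only [Function.comp_apply, id, Polynomial.eval_comp, Polynomial.eval_mul,
    Polynomial.eval_C, Polynomial.eval_X, exp_neg, div_eq_mul_inv, inv_mul_cancel_left₀ hκ.ne']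

theorem Polynomial.exists_eval_mul_exp_neg_mul_le (p : Polynomial ℝ) {κ : ℝ} (hκ : 0 < κ)
    (a : ℝ) : ∃ C, ∀ x, a ≤ x → p.eval x * exp (-(κ * x)) ≤ C := by
  obtain ⟨X, hX⟩ := ((p.tendsto_eval_mul_exp_neg_mul_atTop hκ).eventually
    (gt_mem_nhds one_pos)).exists_forall_of_atTop
  obtain ⟨C, hC⟩ := (isCompact_Icc (a := a) (b := X)).exists_bound_of_continuousOn
    (by fun_prop : Continuous fun x => p.eval x * exp (-(κ * x))).continuousOn
  refine ⟨max C 1, fun x hx => ?_⟩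
  rcases le_total x X with h | h
  · exact (le_abs_self _).trans ((hC x ⟨hx, h⟩).trans (le_max_left _ _))
  · exact (hX x h).le.trans (le_max_right _ _)

theorem HasDerivAt.nonneg_of_monotoneOn_of_mem_nhds {g : ℝ → ℝ} {g' x : ℝ} {s : Set ℝ}
    (hd : HasDerivAt g g' x) (hg : MonotoneOn g s) (hs : s ∈ 𝓝 x) : 0 ≤ g' := by
  refine hd.hasDerivWithinAt.nonneg_of_monotoneOn ?_ hg
  rw [AccPt, inf_eq_left.2 (le_principal_iff.2 (mem_nhdsWithin_of_mem_nhds hs))]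
  infer_instance

theorem le_mul_exp_neg_integral_of_deriv_le {W W' k : ℝ → ℝ} {a b : ℝ} (hab : a ≤ b)
    (hW : ContinuousOn W (Icc a b)) (hW' : ∀ t ∈ Ioo a b, HasDerivAt W (W' t) t)
    (hk : ContinuousOn k (Icc a b)) (h : ∀ t ∈ Ioo a b, W' t ≤ -k t * W t) :
    W b ≤ W a * exp (-∫ s in a..b, k s) := by
  set M : ℝ → ℝ := fun u => ∫ s in a..u, k s
  have hMc : ContinuousOn M (Icc a b) := by
    have := intervalIntegral.continuousOn_primitive_interval (μ := MeasureTheory.volume)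
      (by rw [uIcc_of_le hab]; exact hk.integrableOn_Icc)
    rwa [uIcc_of_le hab] at this
  have hM' : ∀ t ∈ Ioo a b, HasDerivAt M (k t) t := fun t ht =>
    intervalIntegral.integral_hasDerivAt_right
      ((hk.mono (Icc_subset_Icc_right ht.2.le)).intervalIntegrable_of_Icc ht.1.le)
      ((hk.mono Ioo_subset_Icc_self).stronglyMeasurableAtFilter isOpen_Ioo t ht)
      (hk.continuousAt (Icc_mem_nhds ht.1 ht.2))
  have hG : AntitoneOn (fun u => W u * exp (M u)) (Icc a b) := by
    refine antitoneOn_of_hasDerivWithinAt_nonpos (convex_Icc a b) (hW.mul hMc.rexp)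
      (f' := fun t => W' t * exp (M t) + W t * (exp (M t) * k t))
      (fun t ht => ?_) (fun t ht => ?_)
    · rw [interior_Icc] at ht
      exact ((hW' t ht).mul (hM' t ht).exp).hasDerivWithinAt
    · rw [interior_Icc] at ht
      have := mul_le_mul_of_nonneg_right (h t ht) (exp_pos (M t)).le
      nlinarith
  have hGab := hG (left_mem_Icc.2 hab) (right_mem_Icc.2 hab) hab
  simp only [M, intervalIntegral.integral_same, exp_zero, mul_one] at hGab
  rw [exp_neg, ← div_eq_mul_inv, le_div_iff₀ (exp_pos _)]
  exact hGab

theorem le_mul_exp_neg_integral_of_hasDerivAt {W W' k : ℝ → ℝ} {a b : ℝ}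
    (hW : ∀ t ∈ Ico a b, HasDerivAt W (W' t) t) (hk : ContinuousOn k (Ico a b))
    (h : ∀ t ∈ Ioo a b, W' t ≤ -k t * W t) (t : ℝ) (ht : t ∈ Ico a b) :
    W t ≤ W a * exp (-∫ s in a..t, k s) :=
  have hsub : Icc a t ⊆ Ico a b := Icc_subset_Ico_right ht.2
  have hsub' : Ioo a t ⊆ Ioo a b := Ioo_subset_Ioo_right ht.2.le
  le_mul_exp_neg_integral_of_deriv_le ht.1
    (fun s hs => (hW s (hsub hs)).continuousAt.continuousWithinAt)
    (fun s hs => hW s (Ioo_subset_Ico_self (hsub' hs))) (hk.mono hsub) fun s hs => h s (hsub' hs)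

theorem integral_div_sub_sq {T t : ℝ} (hT : 0 < T) (ht : t < T) :
    ∫ s in (0:ℝ)..t, (T / (T - s)) ^ 2 = T * (T / (T - t) - 1) := by
  have hne : ∀ s ∈ uIcc 0 t, T - s ≠ 0 := fun s hs =>
    (sub_pos.2 (hs.2.trans_lt (max_lt hT ht))).ne'
  have hF : ∀ s ∈ uIcc 0 t, HasDerivAt (fun s => T ^ 2 * (T - s)⁻¹) ((T / (T - s)) ^ 2) s :=
    fun s hs => ((((hasDerivAt_id s).const_sub T).inv (hne s hs)).const_mul (T ^ 2)).congr_deriv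
      (by simp only [id]; field_simp)
  rw [intervalIntegral.integral_eq_sub_of_hasDerivAt hF
    (ContinuousOn.intervalIntegrable fun s hs => ?_)]
  · have := hT.ne'
    field_simp
    ring
  · exact (continuousAt_const.div (continuousAt_const.sub continuousAt_id) (hne s hs)).pow 2
      |>.continuousWithinAt

theorem tendsto_div_sub_nhdsLT_atTop {T : ℝ} (hT : 0 < T) :
    Tendsto (fun t => T / (T - t)) (𝓝[<] T) atTop := by
  have h : Tendsto (fun t => T - t) (𝓝[<] T) (𝓝[>] 0) := by
    refine tendsto_nhdsWithin_of_tendsto_nhds_of_eventually_within _ ?_ ?_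
    · have : Tendsto (fun t : ℝ => T - t) (𝓝 T) (𝓝 (T - T)) := tendsto_const_nhds.sub tendsto_id
      simpa using this.mono_left nhdsWithin_le_nhds
    · filter_upwards [self_mem_nhdsWithin] with t (ht : t < T) using sub_pos.2 ht
  exact ((tendsto_inv_nhdsGT_zero.comp h).const_mul_atTop hT).congr fun t => by
    simp [div_eq_mul_inv]

theorem le_integral_of_blowup_le {T p₀ t : ℝ} {k : ℝ → ℝ} (hT : 0 < T)
    (hk : ∀ s ∈ Ico 0 T, p₀ * (T / (T - s)) ^ 2 ≤ k s) (hkc : ContinuousOn k (Ico 0 T))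
    (ht : t ∈ Ico 0 T) : p₀ * T * (T / (T - t) - 1) ≤ ∫ s in (0:ℝ)..t, k s := by
  have hsub : Icc 0 t ⊆ Ico 0 T := Icc_subset_Ico_right ht.2
  calc p₀ * T * (T / (T - t) - 1) = ∫ s in (0:ℝ)..t, p₀ * (T / (T - s)) ^ 2 := by
        rw [intervalIntegral.integral_const_mul, integral_div_sub_sq hT ht.2, mul_assoc]
    _ ≤ ∫ s in (0:ℝ)..t, k s := by
      refine intervalIntegral.integral_mono_on ht.1 ?_
        ((hkc.mono hsub).intervalIntegrable_of_Icc ht.1) fun s hs => hk s (hsub hs)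
      refine ContinuousOn.intervalIntegrable_of_Icc ht.1 fun s hs => ?_
      have : T - s ≠ 0 := (sub_pos.2 (hsub hs).2).ne'
      exact (continuousAt_const.mul ((continuousAt_const.div (continuousAt_const.sub
        continuousAt_id) this).pow 2)).continuousWithinAt

theorem exists_le_mul_exp_neg_integral_half {T p₀ : ℝ} {p : Polynomial ℝ} {V k : ℝ → ℝ}
    (hT : 0 < T) (hp₀ : 0 < p₀) (hV : ∀ t ∈ Ico 0 T, 0 ≤ V t)
    (hk : ∀ t ∈ Ico 0 T, p₀ * (T / (T - t)) ^ 2 ≤ k t) (hkc : ContinuousOn k (Ico 0 T))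
    (hVk : ∀ t ∈ Ico 0 T, V t ≤ p.eval (T / (T - t)) * exp (-∫ s in (0:ℝ)..t, k s)) :
    ∃ c, 0 < c ∧ ∀ t ∈ Ico 0 T, V t ≤ c * exp (-∫ s in (0:ℝ)..t, k s / 2) := by
  set κ := p₀ * T / 2
  obtain ⟨C, hC⟩ := p.exists_eval_mul_exp_neg_mul_le (by positivity : 0 < κ) 1
  refine ⟨exp κ * max C 1, by positivity, fun t ht => ?_⟩
  set x := T / (T - t)
  set I := ∫ s in (0:ℝ)..t, k s
  have hx : 1 ≤ x := (one_le_div (sub_pos.2 ht.2)).2 (by linarith [ht.1])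
  have hI : κ * (x - 1) ≤ I / 2 := by
    have : p₀ * T * (x - 1) ≤ I := le_integral_of_blowup_le hT hk hkc ht
    show p₀ * T / 2 * (x - 1) ≤ I / 2
    linarith
  have hpx : 0 ≤ p.eval x := nonneg_of_mul_nonneg_left ((hV t ht).trans (hVk t ht)) (exp_pos _)
  rw [intervalIntegral.integral_div]
  calc V t ≤ p.eval x * exp (-I) := hVk t ht
    _ = p.eval x * exp (-(I / 2)) * exp (-(I / 2)) := by
      rw [mul_assoc, ← exp_add]; ring_nf
    _ ≤ p.eval x * exp (-(κ * (x - 1))) * exp (-(I / 2)) := by gcongr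
    _ = exp κ * (p.eval x * exp (-(κ * x))) * exp (-(I / 2)) := by
      rw [mul_sub, mul_one, neg_sub, sub_eq_add_neg, exp_add]; ring
    _ ≤ exp κ * max C 1 * exp (-(I / 2)) := by
      gcongr
      exact (hC x hx).trans (le_max_left _ _)

theorem tendsto_zero_and_ptExpConv_of_le {T p₀ : ℝ} {p : Polynomial ℝ} {V k : ℝ → ℝ}
    (hT : 0 < T) (hp₀ : 0 < p₀) (hV : ∀ t ∈ Ico 0 T, 0 ≤ V t)
    (hk : ∀ t ∈ Ico 0 T, p₀ * (T / (T - t)) ^ 2 ≤ k t) (hkc : ContinuousOn k (Ico 0 T))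
    (hVk : ∀ t ∈ Ico 0 T, V t ≤ p.eval (T / (T - t)) * exp (-∫ s in (0:ℝ)..t, k s)) :
    Tendsto V (𝓝[<] T) (𝓝 0) ∧ PTExpConv T V := by
  obtain ⟨c, hc, hVc⟩ := exists_le_mul_exp_neg_integral_half hT hp₀ hV hk hkc hVk
  have hIoo : Ioo 0 T ⊆ Ico 0 T := Ioo_subset_Ico_self
  refine ⟨?_, 0, c, p₀ / 2, fun s => k s / 2, le_rfl, hT, hc, half_pos hp₀,
    fun t ht => by linarith [hk t (hIoo ht)],
    fun t ht => (abs_of_nonneg (hV t (hIoo ht))).trans_le (hVc t (hIoo ht))⟩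
  have hlim : Tendsto (fun t => c * exp (-(p₀ * T / 2 * (T / (T - t) - 1)))) (𝓝[<] T) (𝓝 0) := by
    simpa [sub_eq_add_neg] using (tendsto_exp_neg_atTop_nhds_zero.comp <|
      (tendsto_atTop_add_const_right _ (-1) (tendsto_div_sub_nhdsLT_atTop hT)).const_mul_atTop
        (by positivity : 0 < p₀ * T / 2)).const_mul c
  have hIco : ∀ᶠ t in 𝓝[<] T, t ∈ Ico 0 T := Ico_mem_nhdsLT hT
  refine squeeze_zero' (hIco.mono hV) (hIco.mono fun t ht => (hVc t ht).trans ?_) hlim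
  gcongr
  rw [intervalIntegral.integral_div]
  linarith [le_integral_of_blowup_le hT hk hkc ht]

theorem exists_weight_of_mul_lt_mul {a₁ a₂ b₁ b₂ : ℝ} (ha₂ : 0 < a₂) (hb₁ : 0 < b₁)
    (hb₂ : 0 < b₂) (hab : b₁ * b₂ < a₁ * a₂) :
    ∃ q δ : ℝ, 0 < q ∧ 0 < δ ∧ q * b₂ + δ ≤ a₁ ∧ b₁ + δ * q ≤ q * a₂ := by
  have hlt : b₁ / a₂ < a₁ / b₂ := by rw [div_lt_div_iff₀ ha₂ hb₂]; linarith
  obtain ⟨q, hlq, hqu⟩ := exists_between hlt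
  have hq : 0 < q := (div_pos hb₁ ha₂).trans hlq
  have h₁ : q * b₂ < a₁ := (lt_div_iff₀ hb₂).1 hqu
  have h₂ : b₁ < q * a₂ := (div_lt_iff₀ ha₂).1 hlq
  refine ⟨q, min (a₁ - q * b₂) (a₂ - b₁ / q), hq,
    lt_min (by linarith) (sub_pos.2 ((div_lt_iff₀ hq).2 (by linarith))), ?_, ?_⟩
  · linarith [min_le_left (a₁ - q * b₂) (a₂ - b₁ / q)]
  · have := mul_le_mul_of_nonneg_right (min_le_right (a₁ - q * b₂) (a₂ - b₁ / q)) hq.le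
    rw [sub_mul, div_mul_cancel₀ _ hq.ne'] at this
    linarith

theorem mul_sub_mul_div_sq_le_div {V V' φ φ' : ℝ} (hV : 0 ≤ V) (hφ : 0 < φ) (hφ' : 0 ≤ φ') :
    (V' * φ - V * φ') / φ ^ 2 ≤ V' / φ := by
  rw [div_le_div_iff₀ (by positivity) hφ]
  nlinarith [mul_nonneg (mul_nonneg hV hφ') hφ.le]

theorem weighted_quotient_deriv_le {a₁ a₂ b₁ b₂ q δ m V₁ V₂ V₁' V₂' φ₁ φ₂ φ₁' φ₂' : ℝ}
    (hq : 0 < q) (hδ : 0 ≤ δ) (h₁ : q * b₂ + δ ≤ a₁) (h₂ : b₁ + δ * q ≤ q * a₂)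
    (hV₁ : 0 ≤ V₁) (hV₂ : 0 ≤ V₂) (hφ₁ : 0 < φ₁) (hφ₂ : 0 < φ₂) (hφ₁' : 0 ≤ φ₁')
    (hφ₂' : 0 ≤ φ₂') (hm₁ : m ≤ φ₁) (hm₂ : m ≤ φ₂)
    (hV₁' : V₁' ≤ φ₁ * (-a₁ * V₁ + b₁ * V₂)) (hV₂' : V₂' ≤ φ₂ * (-a₂ * V₂ + b₂ * V₁)) :
    (V₁' * φ₁ - V₁ * φ₁') / φ₁ ^ 2 + (q * V₂' * φ₂ - q * V₂ * φ₂') / φ₂ ^ 2 ≤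
      -(δ * m) * (V₁ / φ₁ + q * V₂ / φ₂) := by
  have e₁ : (V₁' * φ₁ - V₁ * φ₁') / φ₁ ^ 2 ≤ -a₁ * V₁ + b₁ * V₂ :=
    (mul_sub_mul_div_sq_le_div hV₁ hφ₁ hφ₁').trans ((div_le_iff₀' hφ₁).2 hV₁')
  have e₂ : (q * V₂' * φ₂ - q * V₂ * φ₂') / φ₂ ^ 2 ≤ q * (-a₂ * V₂ + b₂ * V₁) :=
    (mul_sub_mul_div_sq_le_div (by positivity) hφ₂ hφ₂').trans <| (div_le_iff₀' hφ₂).2 <| by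
      nlinarith [mul_le_mul_of_nonneg_left hV₂' hq.le]
  have f₁ : m * (V₁ / φ₁) ≤ V₁ :=
    (mul_le_mul_of_nonneg_right hm₁ (div_nonneg hV₁ hφ₁.le)).trans_eq (mul_div_cancel₀ _ hφ₁.ne')
  have f₂ : m * (q * V₂ / φ₂) ≤ q * V₂ :=
    (mul_le_mul_of_nonneg_right hm₂ (div_nonneg (mul_nonneg hq.le hV₂) hφ₂.le)).trans_eq
      (mul_div_cancel₀ _ hφ₂.ne')
  nlinarith [mul_le_mul_of_nonneg_left f₁ hδ, mul_le_mul_of_nonneg_left f₂ hδ,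
    mul_le_mul_of_nonneg_right h₁ hV₁, mul_le_mul_of_nonneg_right h₂ hV₂]

theorem le_eval_C_mul_mul_of_div_le {V φ x c e : ℝ} {p : Polynomial ℝ} (hV : 0 ≤ V) (hφ : 0 < φ)
    (hφp : φ ≤ p.eval x) (hVφ : V / φ ≤ c * e) : V ≤ (Polynomial.C c * p).eval x * e := by
  rw [Polynomial.eval_C_mul, mul_comm c, mul_assoc]
  exact ((div_le_iff₀' hφ).1 hVφ).trans
    (mul_le_mul_of_nonneg_right hφp ((div_nonneg hV hφ.le).trans hVφ))

theorem stmt15_general (T a₁ a₂ b₁ b₂ p₀ : ℝ) (hT : 0 < T) (hp₀ : 0 < p₀)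
    (ha₂ : 0 < a₂) (hb₁ : 0 < b₁) (hb₂ : 0 < b₂)
    (hab : b₁ * b₂ < a₁ * a₂)
    (φ₁ φ₂ φ₁' φ₂' V₁ V₁' V₂ V₂' : ℝ → ℝ)
    (p₂ : Polynomial ℝ)
    (hφ₁d : ∀ t ∈ Set.Ico 0 T, HasDerivAt φ₁ (φ₁' t) t)
    (hφ₂d : ∀ t ∈ Set.Ico 0 T, HasDerivAt φ₂ (φ₂' t) t)
    (hφ₁mono : MonotoneOn φ₁ (Set.Ico 0 T))
    (hφ₂mono : MonotoneOn φ₂ (Set.Ico 0 T))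
    (hφ₁bd : ∀ t ∈ Set.Ico 0 T,
      p₀ * (T / (T - t)) ^ 2 ≤ φ₁ t ∧ φ₁ t ≤ p₂.eval (T / (T - t)))
    (hφ₂bd : ∀ t ∈ Set.Ico 0 T,
      p₀ * (T / (T - t)) ^ 2 ≤ φ₂ t ∧ φ₂ t ≤ p₂.eval (T / (T - t)))
    (hV₁nn : ∀ t ∈ Set.Ico 0 T, 0 ≤ V₁ t) (hV₂nn : ∀ t ∈ Set.Ico 0 T, 0 ≤ V₂ t)
    (hderiv₁ : ∀ t ∈ Set.Ico 0 T, HasDerivAt V₁ (V₁' t) t)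
    (hderiv₂ : ∀ t ∈ Set.Ico 0 T, HasDerivAt V₂ (V₂' t) t)
    (hineq₁ : ∀ t ∈ Set.Ico 0 T, V₁' t ≤ φ₁ t * (-a₁ * V₁ t + b₁ * V₂ t))
    (hineq₂ : ∀ t ∈ Set.Ico 0 T, V₂' t ≤ φ₂ t * (-a₂ * V₂ t + b₂ * V₁ t)) :
    (∃ q₁ q₂ δ : ℝ, 0 < q₁ ∧ 0 < q₂ ∧ 0 < δ ∧
      ∀ t ∈ Set.Ico 0 T,
        q₁ * V₁ t / φ₁ t + q₂ * V₂ t / φ₂ t ≤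
          (q₁ * V₁ 0 / φ₁ 0 + q₂ * V₂ 0 / φ₂ 0) *
            Real.exp (-δ * ∫ s in (0:ℝ)..t, min (φ₁ s) (φ₂ s))) ∧
    Tendsto V₁ (nhdsWithin T (Set.Iio T)) (nhds 0) ∧
    Tendsto V₂ (nhdsWithin T (Set.Iio T)) (nhds 0) ∧
    PTExpConv T V₁ ∧ PTExpConv T V₂ := by
  obtain ⟨q, δ, hq, hδ, h₁, h₂⟩ := exists_weight_of_mul_lt_mul ha₂ hb₁ hb₂ hab
  have hblowup : ∀ t ∈ Ico 0 T, 0 < p₀ * (T / (T - t)) ^ 2 := fun t ht => by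
    have := sub_pos.2 ht.2; positivity
  have hφ₁ : ∀ t ∈ Ico 0 T, 0 < φ₁ t := fun t ht => (hblowup t ht).trans_le (hφ₁bd t ht).1
  have hφ₂ : ∀ t ∈ Ico 0 T, 0 < φ₂ t := fun t ht => (hblowup t ht).trans_le (hφ₂bd t ht).1
  set k : ℝ → ℝ := fun s => δ * min (φ₁ s) (φ₂ s)
  have hk : ∀ t ∈ Ico 0 T, δ * p₀ * (T / (T - t)) ^ 2 ≤ k t := fun t ht => by
    rw [mul_assoc]
    exact mul_le_mul_of_nonneg_left (le_min (hφ₁bd t ht).1 (hφ₂bd t ht).1) hδ.le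
  have hkc : ContinuousOn k (Ico 0 T) := fun t ht => (continuousAt_const.mul
    ((hφ₁d t ht).continuousAt.min (hφ₂d t ht).continuousAt)).continuousWithinAt
  set W : ℝ → ℝ := fun t => V₁ t / φ₁ t + q * V₂ t / φ₂ t
  have hW : ∀ t ∈ Ico 0 T, W t ≤ W 0 * exp (-∫ s in (0:ℝ)..t, k s) :=
    le_mul_exp_neg_integral_of_hasDerivAt (fun t ht => ((hderiv₁ t ht).div (hφ₁d t ht)
      (hφ₁ t ht).ne').add (((hderiv₂ t ht).const_mul q).div (hφ₂d t ht) (hφ₂ t ht).ne')) hkc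
      fun t ht => by
        have ht' := Ioo_subset_Ico_self ht
        exact weighted_quotient_deriv_le hq hδ.le h₁ h₂ (hV₁nn t ht') (hV₂nn t ht') (hφ₁ t ht')
          (hφ₂ t ht')
          ((hφ₁d t ht').nonneg_of_monotoneOn_of_mem_nhds hφ₁mono (Ico_mem_nhds ht.1 ht.2))
          ((hφ₂d t ht').nonneg_of_monotoneOn_of_mem_nhds hφ₂mono (Ico_mem_nhds ht.1 ht.2))
          (min_le_left _ _) (min_le_right _ _) (hineq₁ t ht') (hineq₂ t ht')
  obtain ⟨hV₁lim, hV₁conv⟩ := tendsto_zero_and_ptExpConv_of_le hT (mul_pos hδ hp₀) hV₁nn hk hkc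
    fun t ht => le_eval_C_mul_mul_of_div_le (hV₁nn t ht) (hφ₁ t ht) (hφ₁bd t ht).2 <|
      (le_add_of_nonneg_right (div_nonneg (mul_nonneg hq.le (hV₂nn t ht)) (hφ₂ t ht).le)).trans
        (hW t ht)
  obtain ⟨hV₂lim, hV₂conv⟩ := tendsto_zero_and_ptExpConv_of_le hT (mul_pos hδ hp₀) hV₂nn hk hkc
    fun t ht => le_eval_C_mul_mul_of_div_le (c := W 0 / q) (hV₂nn t ht) (hφ₂ t ht)
      (hφ₂bd t ht).2 <| by
      rw [div_mul_eq_mul_div, le_div_iff₀' hq, ← mul_div_assoc]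
      exact (le_add_of_nonneg_left (div_nonneg (hV₁nn t ht) (hφ₁ t ht).le)).trans (hW t ht)
  refine ⟨⟨1, q, δ, one_pos, hq, hδ, fun t ht => ?_⟩, hV₁lim, hV₂lim, hV₁conv, hV₂conv⟩
  simpa only [one_mul, k, intervalIntegral.integral_const_mul, neg_mul] using hW t ht

theorem stmt15 (T a₁ a₂ b₁ b₂ p₀ : ℝ) (hT : 0 < T) (hp₀ : 0 < p₀)
    (ha₁ : 0 < a₁) (ha₂ : 0 < a₂) (hb₁ : 0 < b₁) (hb₂ : 0 < b₂)
    (hab : b₁ * b₂ < a₁ * a₂)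
    (φ₁ φ₂ φ₁' φ₂' V₁ V₁' V₂ V₂' : ℝ → ℝ)
    (p₂ : Polynomial ℝ) (hp₂ : ∀ n, 0 ≤ p₂.coeff n)
    (hφ₁d : ∀ t ∈ Set.Ico 0 T, HasDerivAt φ₁ (φ₁' t) t)
    (hφ₂d : ∀ t ∈ Set.Ico 0 T, HasDerivAt φ₂ (φ₂' t) t)
    (hφ₁mono : MonotoneOn φ₁ (Set.Ico 0 T))
    (hφ₂mono : MonotoneOn φ₂ (Set.Ico 0 T))
    (hφ₁bd : ∀ t ∈ Set.Ico 0 T,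
      p₀ * (T / (T - t)) ^ 2 ≤ φ₁ t ∧ φ₁ t ≤ p₂.eval (T / (T - t)))
    (hφ₂bd : ∀ t ∈ Set.Ico 0 T,
      p₀ * (T / (T - t)) ^ 2 ≤ φ₂ t ∧ φ₂ t ≤ p₂.eval (T / (T - t)))
    (hV₁nn : ∀ t ∈ Set.Ico 0 T, 0 ≤ V₁ t) (hV₂nn : ∀ t ∈ Set.Ico 0 T, 0 ≤ V₂ t)
    (hderiv₁ : ∀ t ∈ Set.Ico 0 T, HasDerivAt V₁ (V₁' t) t)
    (hderiv₂ : ∀ t ∈ Set.Ico 0 T, HasDerivAt V₂ (V₂' t) t)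
    (hineq₁ : ∀ t ∈ Set.Ico 0 T, V₁' t ≤ φ₁ t * (-a₁ * V₁ t + b₁ * V₂ t))
    (hineq₂ : ∀ t ∈ Set.Ico 0 T, V₂' t ≤ φ₂ t * (-a₂ * V₂ t + b₂ * V₁ t)) :
    (∃ q₁ q₂ δ : ℝ, 0 < q₁ ∧ 0 < q₂ ∧ 0 < δ ∧
      ∀ t ∈ Set.Ico 0 T,
        q₁ * V₁ t / φ₁ t + q₂ * V₂ t / φ₂ t ≤
          (q₁ * V₁ 0 / φ₁ 0 + q₂ * V₂ 0 / φ₂ 0) *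
            Real.exp (-δ * ∫ s in (0:ℝ)..t, min (φ₁ s) (φ₂ s))) ∧
    Tendsto V₁ (nhdsWithin T (Set.Iio T)) (nhds 0) ∧
    Tendsto V₂ (nhdsWithin T (Set.Iio T)) (nhds 0) ∧
    PTExpConv T V₁ ∧ PTExpConv T V₂ :=
  stmt15_general T a₁ a₂ b₁ b₂ p₀ hT hp₀ ha₂ hb₁ hb₂ hab φ₁ φ₂ φ₁' φ₂' V₁ V₁' V₂ V₂' p₂ hφ₁d hφ₂d
    hφ₁mono hφ₂mono hφ₁bd hφ₂bd hV₁nn hV₂nn hderiv₁ hderiv₂ hineq₁ hineq₂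
end
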